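/- arXiv:2310.14043 — 2 statements merged into one kernel-verified Lean document; each statement's English description precedes it below -/
import Mathlib

section
/- Let 1 ≤ p < ∞ and let D be an n × n doubly stochastic matrix. Then ‖D‖_{S_p} ≤ n^{1/p}, and equality ‖D‖_{S_p} = n^{1/p} holds if and only if D is a permutation matrix. -/
open Matrix BigOperators

/-- The matrix `J_n` with all entries equal to `1/n`. -/
noncomputable def matJ (n : ℕ) : Matrix (Fin n) (Fin n) ℝ :=
  Matrix.of fun _ _ => (n : ℝ)⁻¹

/-- The singular values of a real square matrix: the square roots of the
eigenvalues of `Aᴴ * A` (`Aᴴ = Aᵀ` over `ℝ`). -/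
noncomputable def singularValues {n : ℕ} (A : Matrix (Fin n) (Fin n) ℝ) : Fin n → ℝ :=
  fun i => Real.sqrt ((Matrix.isHermitian_conjTranspose_mul_self A).eigenvalues i)

/-- The Schatten `p`-norm of a real square matrix. -/
noncomputable def schattenNorm {n : ℕ} (p : ℝ) (A : Matrix (Fin n) (Fin n) ℝ) : ℝ :=
  (∑ i, singularValues A i ^ p) ^ (1 / p)

/-- The Frobenius norm of a real square matrix. -/
noncomputable def frobNorm {n : ℕ} (A : Matrix (Fin n) (Fin n) ℝ) : ℝ :=
  Real.sqrt (∑ i, ∑ j, (A i j) ^ 2)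

/-- The minimal trace of a square matrix: the minimum over all permutations `σ`
of `∑ i, A i (σ i)`. -/
noncomputable def trMin {n : ℕ} (A : Matrix (Fin n) (Fin n) ℝ) : ℝ :=
  ⨅ σ : Equiv.Perm (Fin n), ∑ i, A i (σ i)

/-- A matrix is a permutation matrix if it is the matrix of some permutation. -/
def IsPermMatrix {n : ℕ} (P : Matrix (Fin n) (Fin n) ℝ) : Prop :=
  ∃ σ : Equiv.Perm (Fin n), P = σ.permMatrix ℝ

/-! A doubly stochastic matrix is a convex combination of permutation matrices (Birkhoff), hence
a contraction for the Euclidean norm, so all its singular values lie in `[0, 1]` and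
`‖D‖_{S_p}^p ≤ n`. Equality forces every singular value to be `1`, i.e.
`∑ D_ij² = tr (Dᵀ D) = n = ∑ D_ij`; since `D_ij² ≤ D_ij`, every entry is `0` or `1`. A zero-one
doubly stochastic matrix is an extreme point of the cube `[0, 1]^(n × n)`, hence of the Birkhoff
polytope, whose extreme points are the permutation matrices. -/

open scoped Matrix.Norms.L2Operator

theorem Fintype.sum_eq_card_iff_of_le_one {ι M : Type*} [Fintype ι] [AddCommMonoidWithOne M]
    [PartialOrder M] [IsOrderedCancelAddMonoid M] {f : ι → M} (hf : ∀ i, f i ≤ 1) :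
    ∑ i, f i = Fintype.card ι ↔ ∀ i, f i = 1 := by
  simpa using Finset.sum_eq_sum_iff_of_le (s := Finset.univ) (g := 1) fun i _ => hf i

namespace Matrix

variable {m k : Type*} [Fintype m] [Fintype k]

theorem trace_conjTranspose_mul_self_eq_sum_sq (A : Matrix k m ℝ) :
    (Aᴴ * A).trace = ∑ i, ∑ j, A i j ^ 2 := by
  rw [Finset.sum_comm]
  simp [trace, mul_apply, sq]

variable [DecidableEq m]

theorem IsHermitian.eigenvalues_le_l2_opNorm {A : Matrix m m ℝ} (hA : A.IsHermitian) (i : m) :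
    hA.eigenvalues i ≤ ‖A‖ :=
  have : Nonempty m := ⟨i⟩
  (le_abs_self _).trans (spectrum.norm_le_norm_of_mem (hA.eigenvalues_mem_spectrum_real i))

theorem eigenvalues_conjTranspose_mul_self_le_one {A : Matrix k m ℝ} (hA : ‖A‖ ≤ 1) (i : m) :
    (isHermitian_conjTranspose_mul_self A).eigenvalues i ≤ 1 := by
  have hAA : ‖Aᴴ * A‖ ≤ 1 := by
    rw [l2_opNorm_conjTranspose_mul_self]
    exact mul_le_one₀ hA (norm_nonneg A) hA
  exact ((isHermitian_conjTranspose_mul_self A).eigenvalues_le_l2_opNorm i).trans hAA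

theorem sum_eigenvalues_conjTranspose_mul_self (A : Matrix k m ℝ) :
    ∑ i, (isHermitian_conjTranspose_mul_self A).eigenvalues i = ∑ i, ∑ j, A i j ^ 2 := by
  rw [← trace_conjTranspose_mul_self_eq_sum_sq,
    (isHermitian_conjTranspose_mul_self A).trace_eq_sum_eigenvalues]
  rfl

theorem sum_sq_eq_card_iff_of_mem_doublyStochastic {D : Matrix m m ℝ}
    (hD : D ∈ doublyStochastic ℝ m) :
    ∑ i, ∑ j, D i j ^ 2 = Fintype.card m ↔ ∀ i j, D i j = 0 ∨ D i j = 1 := by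
  have hsq_le : ∀ i j, D i j ^ 2 ≤ D i j := fun i j => by
    nlinarith [nonneg_of_mem_doublyStochastic hD (i := i) (j := j),
      le_one_of_mem_doublyStochastic hD (i := i) (j := j)]
  have hsum : ∑ i, ∑ j, D i j = Fintype.card m := by
    simp [sum_row_of_mem_doublyStochastic hD]
  rw [← hsum, Finset.sum_eq_sum_iff_of_le fun i _ => Finset.sum_le_sum fun j _ => hsq_le i j]
  simp only [Finset.mem_univ, true_implies,
    Finset.sum_eq_sum_iff_of_le fun j _ => hsq_le _ j]
  exact forall₂_congr fun i j =>
    ⟨eq_zero_or_one_of_sq_eq_self, by rintro (h | h) <;> simp [h]⟩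

theorem exists_eq_permMatrix_iff_of_mem_doublyStochastic {D : Matrix m m ℝ}
    (hD : D ∈ doublyStochastic ℝ m) :
    (∃ σ : Equiv.Perm m, D = σ.permMatrix ℝ) ↔ ∀ i j, D i j = 0 ∨ D i j = 1 := by
  refine ⟨?_, fun h01 => ?_⟩
  · rintro ⟨σ, rfl⟩ i j
    by_cases h : σ i = j <;> simp [Equiv.toPEquiv_apply, h]
  let cube : Set (m → m → ℝ) := Set.univ.pi fun _ => Set.univ.pi fun _ => Set.Icc 0 1
  have hsub : (doublyStochastic ℝ m : Set (Matrix m m ℝ)) ⊆ cube :=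
    fun M hM i _ j _ => ⟨nonneg_of_mem_doublyStochastic hM, le_one_of_mem_doublyStochastic hM⟩
  have hcube : D ∈ Set.extremePoints ℝ cube := by
    simp only [cube, extremePoints_pi, Set.extremePoints_Icc zero_le_one]
    exact fun i _ j _ => h01 i j
  have hext : D ∈ Set.extremePoints ℝ (doublyStochastic ℝ m : Set (Matrix m m ℝ)) :=
    inter_extremePoints_subset_extremePoints_of_subset hsub ⟨hD, hcube⟩
  rw [extremePoints_doublyStochastic] at hext
  obtain ⟨σ, hσ⟩ := hext
  exact ⟨σ, hσ.symm⟩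

end Matrix

section SchattenNorm

variable {n : ℕ} {p : ℝ} {A : Matrix (Fin n) (Fin n) ℝ}

theorem singularValues_nonneg (A : Matrix (Fin n) (Fin n) ℝ) (i : Fin n) :
    0 ≤ singularValues A i :=
  Real.sqrt_nonneg _

theorem singularValues_le_one (hA : ‖A‖ ≤ 1) (i : Fin n) : singularValues A i ≤ 1 :=
  Real.sqrt_le_one.mpr (eigenvalues_conjTranspose_mul_self_le_one hA i)

theorem singularValues_rpow_le_one (hp : 0 ≤ p) (hA : ‖A‖ ≤ 1) (i : Fin n) :
    singularValues A i ^ p ≤ 1 :=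
  Real.rpow_le_one (singularValues_nonneg A i) (singularValues_le_one hA i) hp

theorem singularValues_rpow_eq_one_iff (hp : p ≠ 0) (i : Fin n) :
    singularValues A i ^ p = 1 ↔ (isHermitian_conjTranspose_mul_self A).eigenvalues i = 1 := by
  have h := Real.rpow_left_inj (singularValues_nonneg A i) zero_le_one hp
  rw [Real.one_rpow] at h
  exact h.trans Real.sqrt_eq_one

theorem schattenNorm_le_of_l2_opNorm_le_one (hp : 0 < p) (hA : ‖A‖ ≤ 1) :
    schattenNorm p A ≤ (n : ℝ) ^ (1 / p) := by
  have hsum : ∑ i, singularValues A i ^ p ≤ n := by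
    simpa using Finset.sum_le_card_nsmul Finset.univ _ 1 fun i _ =>
      singularValues_rpow_le_one hp.le hA i
  exact Real.rpow_le_rpow (Finset.sum_nonneg fun i _ => Real.rpow_nonneg
    (singularValues_nonneg A i) p) hsum (by positivity)

theorem schattenNorm_eq_iff_of_l2_opNorm_le_one (hp : 0 < p) (hA : ‖A‖ ≤ 1) :
    schattenNorm p A = (n : ℝ) ^ (1 / p) ↔ ∑ i, ∑ j, A i j ^ 2 = n := by
  have hH := isHermitian_conjTranspose_mul_self A
  calc schattenNorm p A = (n : ℝ) ^ (1 / p)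
      ↔ ∑ i, singularValues A i ^ p = Fintype.card (Fin n) := by
        rw [schattenNorm, Real.rpow_left_inj (Finset.sum_nonneg fun i _ => Real.rpow_nonneg
          (singularValues_nonneg A i) p) (Nat.cast_nonneg n) (by positivity), Fintype.card_fin]
    _ ↔ ∀ i, hH.eigenvalues i = 1 := by
        rw [Fintype.sum_eq_card_iff_of_le_one (singularValues_rpow_le_one hp.le hA)]
        exact forall_congr' fun i => singularValues_rpow_eq_one_iff hp.ne' i
    _ ↔ ∑ i, hH.eigenvalues i = Fintype.card (Fin n) :=
        (Fintype.sum_eq_card_iff_of_le_one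
          (eigenvalues_conjTranspose_mul_self_le_one hA)).symm
    _ ↔ ∑ i, ∑ j, A i j ^ 2 = n := by
        rw [sum_eigenvalues_conjTranspose_mul_self, Fintype.card_fin]

end SchattenNorm

/-- For `1 ≤ p < ∞` and `D` doubly stochastic, `‖D‖_{S_p} ≤ n^{1/p}`,
with equality iff `D` is a permutation matrix. -/
theorem schattenNorm_doublyStochastic_le {n : ℕ} {p : ℝ} (hp : 1 ≤ p)
    (D : Matrix (Fin n) (Fin n) ℝ) (hD : D ∈ doublyStochastic ℝ (Fin n)) :
    schattenNorm p D ≤ (n : ℝ) ^ (1 / p) ∧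
      (schattenNorm p D = (n : ℝ) ^ (1 / p) ↔ IsPermMatrix D) := by
  have hp0 : 0 < p := zero_lt_one.trans_le hp
  have hD₁ : ‖D‖ ≤ 1 := l2_opNorm_le_one_of_mem_doublyStochastic hD
  refine ⟨schattenNorm_le_of_l2_opNorm_le_one hp0 hD₁, ?_⟩
  rw [schattenNorm_eq_iff_of_l2_opNorm_le_one hp0 hD₁, IsPermMatrix,
    exists_eq_permMatrix_iff_of_mem_doublyStochastic hD]
  simpa using sum_sq_eq_card_iff_of_mem_doublyStochastic hD
end

section
/- For every n × n real matrix A, the minimal radius of a bounding ball of the Birkhoff polytope Ω_n centered at A relative to the Frobenius norm is r_F(A) = max_{D ∈ Ω_n} ‖A − D‖_F = ( ‖A‖_F² + n − 2·tr_min(A) )^{1/2}. -/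
open Matrix BigOperators

/-! By Birkhoff–von Neumann, `Ω_n` is the convex hull of the permutation matrices, so the convex
function `D ↦ ‖A - D‖_F` attains its maximum over `Ω_n` at some permutation matrix `P_σ`. Since
`‖A - P_σ‖_F² = ‖A‖_F² + n - 2 ∑ i, A i (σ i)`, the best `σ` is one realising the minimal trace. -/

open Finset

attribute [local instance] Matrix.frobeniusNormedAddCommGroup Matrix.frobeniusNormedSpace

lemma frobNorm_eq_norm {n : ℕ} (A : Matrix (Fin n) (Fin n) ℝ) : frobNorm A = ‖A‖ := by
  simp only [frobNorm, Matrix.frobenius_norm_def, Real.sqrt_eq_rpow, Real.rpow_two,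
    Real.norm_eq_abs, sq_abs]

lemma sq_frobNorm {n : ℕ} (A : Matrix (Fin n) (Fin n) ℝ) :
    frobNorm A ^ 2 = ∑ i, ∑ j, A i j ^ 2 :=
  Real.sq_sqrt <| sum_nonneg fun _ _ => sum_nonneg fun _ _ => sq_nonneg _

lemma sum_sq_sub_permMatrix_row {ι : Type*} [Fintype ι] [DecidableEq ι]
    (A : Matrix ι ι ℝ) (σ : Equiv.Perm ι) (i : ι) :
    ∑ j, (A i j - σ.permMatrix ℝ i j) ^ 2 = ∑ j, A i j ^ 2 + 1 - 2 * A i (σ i) := by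
  have hrow : ∀ j, (A i j - σ.permMatrix ℝ i j) ^ 2
      = A i j ^ 2 + (if σ i = j then 1 else 0) - 2 * (if σ i = j then A i j else 0) := by
    intro j
    simp only [Equiv.Perm.permMatrix, PEquiv.toMatrix_apply, Equiv.toPEquiv_apply,
      Option.mem_def, Option.some.injEq]
    split_ifs <;> ring
  simp only [hrow, sum_sub_distrib, sum_add_distrib, ← mul_sum, sum_ite_eq, mem_univ, if_true]

lemma frobNorm_sub_permMatrix {n : ℕ} (A : Matrix (Fin n) (Fin n) ℝ) (σ : Equiv.Perm (Fin n)) :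
    frobNorm (A - σ.permMatrix ℝ) = Real.sqrt (frobNorm A ^ 2 + n - 2 * ∑ i, A i (σ i)) := by
  rw [sq_frobNorm, frobNorm]
  simp only [Matrix.sub_apply, sum_sq_sub_permMatrix_row, sum_sub_distrib, sum_add_distrib,
    ← mul_sum, sum_const, card_univ, Fintype.card_fin, nsmul_eq_mul, mul_one]

lemma exists_perm_frobNorm_sub_le {n : ℕ} (A : Matrix (Fin n) (Fin n) ℝ)
    {D : Matrix (Fin n) (Fin n) ℝ} (hD : D ∈ doublyStochastic ℝ (Fin n)) :
    ∃ σ : Equiv.Perm (Fin n), frobNorm (A - D) ≤ frobNorm (A - σ.permMatrix ℝ) := by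
  rw [← SetLike.mem_coe, doublyStochastic_eq_convexHull_permMatrix] at hD
  obtain ⟨_, ⟨σ, rfl⟩, hdist⟩ := convexHull_exists_dist_ge hD A
  exact ⟨σ, by simpa only [frobNorm_eq_norm, dist_eq_norm', norm_sub_rev] using hdist⟩

lemma trMin_le {n : ℕ} (A : Matrix (Fin n) (Fin n) ℝ) (σ : Equiv.Perm (Fin n)) :
    trMin A ≤ ∑ i, A i (σ i) :=
  ciInf_le (Finite.bddBelow_range _) σ

lemma exists_trMin_eq {n : ℕ} (A : Matrix (Fin n) (Fin n) ℝ) :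
    ∃ σ : Equiv.Perm (Fin n), trMin A = ∑ i, A i (σ i) :=
  exists_eq_ciInf_of_finite.imp fun _ => Eq.symm

/-- For every `n × n` real matrix `A`, the minimal radius of a bounding
ball of `Ω_n` centered at `A` relative to the Frobenius norm is attained and equals
`(‖A‖_F² + n − 2 tr_min(A))^{1/2}`. -/
theorem frob_bounding_radius {n : ℕ} (A : Matrix (Fin n) (Fin n) ℝ) :
    IsGreatest {r : ℝ | ∃ D ∈ doublyStochastic ℝ (Fin n), r = frobNorm (A - D)}
      (Real.sqrt (frobNorm A ^ 2 + n - 2 * trMin A)) := by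
  constructor
  · obtain ⟨σ, hσ⟩ := exists_trMin_eq A
    exact ⟨σ.permMatrix ℝ, permMatrix_mem_doublyStochastic, by rw [frobNorm_sub_permMatrix, hσ]⟩
  · rintro r ⟨D, hD, rfl⟩
    obtain ⟨σ, hσ⟩ := exists_perm_frobNorm_sub_le A hD
    calc frobNorm (A - D) ≤ frobNorm (A - σ.permMatrix ℝ) := hσ
      _ ≤ Real.sqrt (frobNorm A ^ 2 + n - 2 * trMin A) := by
        rw [frobNorm_sub_permMatrix]
        gcongr
        exact trMin_le A σ
end
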